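/- For every integer m ≥ 2 and every r ∈ ℤ/nℤ, every monomial occurring with nonzero coefficient in σ_{(n−1)(m−1)}^{(r)}(x_1,…,x_m) has total degree at most n−1 in the set of variables {x_m^{(s)} : s ∈ ℤ/nℤ}, and total degree at least n−1 in the set of variables {x_1^{(s)} : s ∈ ℤ/nℤ} ∪ {x_m^{(s)} : s ∈ ℤ/nℤ}. -/
import Mathlib


noncomputable section

open Finset MvPolynomial

lemma prod_X_eq_monomial {σ : Type*} {ι : Type*} [DecidableEq σ] [DecidableEq ι]
    (s : Finset ι) (g : ι → σ) :
    (∏ j ∈ s, (X (g j) : MvPolynomial σ ℤ)) =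
      monomial (∑ j ∈ s, Finsupp.single (g j) 1) 1 := by
  induction s using Finset.induction with
  | empty => simp [monomial_zero']
  | @insert a s h ih =>
      rw [Finset.prod_insert h, Finset.sum_insert h, ih, X, monomial_mul, one_mul]

lemma sum_range_cast {n : ℕ} [NeZero n] (g : ZMod n → ℕ) :
    ∑ t ∈ Finset.range n, g ((t : ℕ) : ZMod n) = ∑ c : ZMod n, g c :=
  Finset.sum_nbij' (fun t => ((t : ℕ) : ZMod n)) (fun c => c.val)
    (fun a _ => Finset.mem_univ _)
    (fun c _ => Finset.mem_range.mpr (ZMod.val_lt c))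
    (fun a ha => ZMod.val_natCast_of_lt (Finset.mem_range.mp ha))
    (fun c _ => ZMod.natCast_rightInverse c)
    (fun a _ => rfl)

lemma sum_single_count {n m : ℕ} [NeZero n] {ι : Type*} (s : Finset ι)
    (q : ι → Fin m) (col : ι → ZMod n) (v : Fin m) :
    (∑ t ∈ Finset.range n,
        (∑ j ∈ s, Finsupp.single ((q j, col j) : Fin m × ZMod n) (1 : ℕ)) (v, (t : ZMod n))) =
      (s.filter fun j => q j = v).card := by
  classical
  rw [sum_range_cast (fun c => (∑ j ∈ s, Finsupp.single ((q j, col j) : Fin m × ZMod n) 1) (v, c))]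
  simp only [Finsupp.finset_sum_apply, Finsupp.single_apply]
  rw [Finset.sum_comm]
  rw [Finset.card_filter]
  apply Finset.sum_congr rfl
  intro j _
  by_cases h : q j = v
  · rw [if_pos h, Finset.sum_eq_single (col j)]
    · rw [if_pos]; exact Prod.ext h rfl
    · intro c _ hc; rw [if_neg]; intro he
      rw [Prod.mk.injEq] at he; exact hc he.2.symm
    · intro h'; exact absurd (Finset.mem_univ _) h'
  · rw [if_neg h, Finset.sum_eq_zero]
    intro c _; rw [if_neg]; intro he
    rw [Prod.mk.injEq] at he; exact h he.1

open Classical in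
/-- `τ_k^{(s)}(x_a, …, x_b)` (1-indexed window `a ≤ i ≤ b`): the sum over weakly increasing
sequences `a ≤ i_1 ≤ ⋯ ≤ i_k ≤ b` in which no value occurs more than `n - 1` times of
`x_{i_1}^{(s)} x_{i_2}^{(s-1)} ⋯ x_{i_k}^{(s-k+1)}`; zero for `k < 0`. -/
def lT (n m a b : ℕ) (k : ℤ) (s : ZMod n) : MvPolynomial (Fin m × ZMod n) ℤ :=
  if 0 ≤ k then
    ∑ f ∈ Finset.univ.filter (fun f : Fin k.toNat → Fin m =>
        Monotone f ∧ (∀ j, a ≤ (f j : ℕ) + 1 ∧ (f j : ℕ) + 1 ≤ b) ∧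
        ∀ v : Fin m, (Finset.univ.filter (fun j => f j = v)).card ≤ n - 1),
      ∏ j : Fin k.toNat, MvPolynomial.X (f j, s - ((j : ℕ) : ZMod n))
  else 0

/-- `σ_k^{(s)}(x_a, …, x_b) = ∑_{i=0}^k x_a^{(s)} x_a^{(s-1)} ⋯ x_a^{(s-i+1)} ·
τ_{k-i}^{(s-i)}(x_{a+1}, …, x_b)`. -/
def lS (n m a b k : ℕ) (s : ZMod n) : MvPolynomial (Fin m × ZMod n) ℤ :=
  ∑ i ∈ Finset.range (k + 1),
    (∏ u ∈ Finset.range i,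
      if h : a - 1 < m then MvPolynomial.X ((⟨a - 1, h⟩ : Fin m), s - (u : ZMod n)) else 0) *
    lT n m (a + 1) b ((k - i : ℕ) : ℤ) (s - (i : ZMod n))

set_option maxHeartbeats 1000000 in
/-- every monomial of `σ_{(n−1)(m−1)}^{(r)}(x_1,…,x_m)` has total degree
at most `n−1` in the variables `{x_m^{(s)}}` and at least `n−1` in
`{x_1^{(s)}} ∪ {x_m^{(s)}}`. -/
theorem sigma_support_degrees (n m : ℕ) (hn : 1 < n) (hm : 2 ≤ m) (r : ZMod n) :
    ∀ d ∈ (lS n m 1 m ((n - 1) * (m - 1)) r).support,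
      (∑ s ∈ Finset.range n, d ((⟨m - 1, by omega⟩ : Fin m), (s : ZMod n))) ≤ n - 1 ∧
      n - 1 ≤ ∑ s ∈ Finset.range n,
        (d ((⟨0, by omega⟩ : Fin m), (s : ZMod n)) +
          d ((⟨m - 1, by omega⟩ : Fin m), (s : ZMod n))) := by
  classical
  haveI : NeZero n := ⟨by omega⟩
  intro d hd
  set k := (n - 1) * (m - 1) with hk
  rw [lS] at hd
  obtain ⟨i, hi, hd⟩ := Finset.mem_biUnion.mp (MvPolynomial.support_sum hd)
  rw [Finset.mem_range] at hi
  have hm0 : 1 - 1 < m := by omega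
  simp only [dif_pos hm0] at hd
  rw [lT, if_pos (Int.natCast_nonneg _)] at hd
  simp only [Int.toNat_natCast] at hd
  rw [Finset.mul_sum] at hd
  obtain ⟨f, hf, hd⟩ := Finset.mem_biUnion.mp (MvPolynomial.support_sum hd)
  rw [Finset.mem_filter] at hf
  obtain ⟨-, -, hfab, hcnt⟩ := hf
  rw [prod_X_eq_monomial, prod_X_eq_monomial, monomial_mul, one_mul] at hd
  rw [MvPolynomial.support_monomial, if_neg one_ne_zero, Finset.mem_singleton] at hd
  subst hd
  have hA := fun v : Fin m => sum_single_count (Finset.range i)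
    (fun _ => (⟨1 - 1, hm0⟩ : Fin m)) (fun u => r - (u : ZMod n)) v
  have hB := fun v : Fin m => sum_single_count (Finset.univ : Finset (Fin (k - i)))
    f (fun j => r - (i : ZMod n) - ((j : ℕ) : ZMod n)) v
  simp only [Finsupp.add_apply, Finset.sum_add_distrib]
  have hvne : (⟨1 - 1, hm0⟩ : Fin m) ≠ (⟨m - 1, by omega⟩ : Fin m) := by
    simp only [ne_eq, Fin.mk.injEq]; omega
  have hAm : ((Finset.range i).filter fun _ => (⟨1 - 1, hm0⟩ : Fin m) = (⟨m - 1, by omega⟩ : Fin m)).card = 0 := by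
    rw [Finset.filter_false_of_mem (fun x _ => hvne), Finset.card_empty]
  have hA0 : ((Finset.range i).filter fun _ => (⟨1 - 1, hm0⟩ : Fin m) = (⟨0, by omega⟩ : Fin m)).card = i := by
    have : (⟨1 - 1, hm0⟩ : Fin m) = (⟨0, by omega⟩ : Fin m) := rfl
    simp [this]
  -- fiber counting
  have hmm1 : m - 1 < m := by omega
  have h0m : (0 : ℕ) < m := by omega
  have hv0m : (⟨0, h0m⟩ : Fin m) ≠ (⟨m - 1, hmm1⟩ : Fin m) := by
    simp only [ne_eq, Fin.mk.injEq]; omega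
  have htot : k - i = ∑ v : Fin m, (Finset.univ.filter fun j => f j = v).card := by
    rw [← Finset.card_eq_sum_card_fiberwise (f := f) (t := Finset.univ) (fun x _ => Finset.mem_univ _)]
    simp
  have hz : (Finset.univ.filter fun j : Fin (k - i) => f j = (⟨0, h0m⟩ : Fin m)).card = 0 := by
    rw [Finset.card_eq_zero, Finset.filter_eq_empty_iff]
    intro j _ hj
    have := (hfab j).1
    rw [hj] at this
    simp at this
  have e1 : ∑ v : Fin m, (Finset.univ.filter fun j => f j = v).card
      = (Finset.univ.filter fun j => f j = (⟨m - 1, hmm1⟩ : Fin m)).card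
        + ∑ v ∈ Finset.univ.erase (⟨m - 1, hmm1⟩ : Fin m), (Finset.univ.filter fun j => f j = v).card :=
    (Finset.add_sum_erase _ _ (Finset.mem_univ _)).symm
  have hmem0 : (⟨0, h0m⟩ : Fin m) ∈ Finset.univ.erase (⟨m - 1, hmm1⟩ : Fin m) :=
    Finset.mem_erase.mpr ⟨hv0m, Finset.mem_univ _⟩
  have e2 : ∑ v ∈ Finset.univ.erase (⟨m - 1, hmm1⟩ : Fin m), (Finset.univ.filter fun j => f j = v).card
      = (Finset.univ.filter fun j => f j = (⟨0, h0m⟩ : Fin m)).card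
        + ∑ v ∈ (Finset.univ.erase (⟨m - 1, hmm1⟩ : Fin m)).erase (⟨0, h0m⟩ : Fin m),
            (Finset.univ.filter fun j => f j = v).card :=
    (Finset.add_sum_erase _ _ hmem0).symm
  have hcard : ((Finset.univ.erase (⟨m - 1, hmm1⟩ : Fin m)).erase (⟨0, h0m⟩ : Fin m)).card = m - 2 := by
    rw [Finset.card_erase_of_mem hmem0, Finset.card_erase_of_mem (Finset.mem_univ _)]
    simp only [Finset.card_univ, Fintype.card_fin]
    omega
  have e3 : ∑ v ∈ (Finset.univ.erase (⟨m - 1, hmm1⟩ : Fin m)).erase (⟨0, h0m⟩ : Fin m),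
      (Finset.univ.filter fun j => f j = v).card ≤ (m - 2) * (n - 1) := by
    calc ∑ v ∈ (Finset.univ.erase (⟨m - 1, hmm1⟩ : Fin m)).erase (⟨0, h0m⟩ : Fin m),
          (Finset.univ.filter fun j => f j = v).card
        ≤ ((Finset.univ.erase (⟨m - 1, hmm1⟩ : Fin m)).erase (⟨0, h0m⟩ : Fin m)).card * (n - 1) := by
          rw [← smul_eq_mul]
          exact Finset.sum_le_card_nsmul _ _ _ (fun v _ => hcnt v)
      _ = (m - 2) * (n - 1) := by rw [hcard]
  have ee : (n - 1) * (m - 1) = (m - 2) * (n - 1) + (n - 1) := by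
    obtain ⟨m', rfl⟩ : ∃ m', m = m' + 2 := ⟨m - 2, by omega⟩
    show (n - 1) * (m' + 1) = m' * (n - 1) + (n - 1)
    ring
  constructor
  · rw [sum_single_count, sum_single_count, hAm]
    have := hcnt (⟨m - 1, hmm1⟩ : Fin m)
    simpa using this
  · rw [sum_single_count, sum_single_count, sum_single_count, sum_single_count, hAm, hA0]
    have hc := hcnt (⟨m - 1, hmm1⟩ : Fin m)
    omega

end
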